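/- The first four coefficients of the asymptotic expansion of (r*(ϕ_ν))² satisfy ρ_1 = 1/2, ρ_2 = 1/2, ρ_3 = −1/2 and ρ_4 = −1/2. -/

import Mathlib

theorem strongRecOn_eq {C : ℕ → Sort*} (n : ℕ) (F : ∀ n, (∀ m, m < n → C m) → C n) :
    Nat.strongRecOn n F = F n (fun m _ => Nat.strongRecOn m F) := by
  unfold Nat.strongRecOn
  exact WellFounded.fix_eq _ _ _

/-- The rational numbers `σ_m^{(k)}`: `σ_m^{(1)} = (-1)^m/4` and, for `k ≥ 2`,
`σ_m^{(k)} = Σ_{i=0}^m Σ_{j=0}^i Σ_{n=1}^{k-1} (-k)^{m-i} σ_j^{(n)} σ_{i-j}^{(k-n)}`.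
`sigmaC k m` is `σ_m^{(k)}` (junk value `0` for `k = 0`). -/
noncomputable def sigmaC : ℕ → ℕ → ℚ := fun k =>
  Nat.strongRecOn k (fun k ih =>
    if k = 0 then fun _ => 0
    else if k = 1 then fun m => (-1 : ℚ) ^ m / 4
    else fun m =>
      let s : ℕ → ℕ → ℚ := fun n j => if h : n < k then ih n h j else 0
      ∑ i ∈ Finset.range (m + 1), ∑ j ∈ Finset.range (i + 1),
        ∑ n ∈ Finset.Icc 1 (k - 1), (-(k : ℚ)) ^ (m - i) * s n j * s (k - n) (i - j))

lemma sigmaC_one (m : ℕ) : sigmaC 1 m = (-1 : ℚ) ^ m / 4 := by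
  rw [sigmaC, strongRecOn_eq]; norm_num

lemma sigmaC_eq {k : ℕ} (h2 : 2 ≤ k) (m : ℕ) :
    sigmaC k m = ∑ i ∈ Finset.range (m + 1), ∑ j ∈ Finset.range (i + 1),
      ∑ n ∈ Finset.Icc 1 (k - 1),
        (-(k : ℚ)) ^ (m - i) * sigmaC n j * sigmaC (k - n) (i - j) := by
  rw [sigmaC, strongRecOn_eq]
  have hk0 : k ≠ 0 := by omega
  have hk1 : k ≠ 1 := by omega
  simp only [hk0, hk1, if_false]
  refine Finset.sum_congr rfl fun i _ => Finset.sum_congr rfl fun j _ =>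
    Finset.sum_congr rfl fun n hn => ?_
  rw [Finset.mem_Icc] at hn
  rw [dif_pos (by omega : n < k), dif_pos (by omega : k - n < k)]
  rfl

lemma sigmaC_two (m : ℕ) : sigmaC 2 m =
    ∑ i ∈ Finset.range (m + 1), ∑ j ∈ Finset.range (i + 1),
      (-2 : ℚ) ^ (m - i) * sigmaC 1 j * sigmaC 1 (i - j) := by
  rw [sigmaC_eq (by norm_num)]
  norm_num

lemma s20 : sigmaC 2 0 = 1/16 := by
  rw [sigmaC_two]; simp [Finset.sum_range_succ, sigmaC_one]; norm_num
lemma s21 : sigmaC 2 1 = -(1/4) := by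
  rw [sigmaC_two]; simp [Finset.sum_range_succ, sigmaC_one]; norm_num
lemma s22 : sigmaC 2 2 = 11/16 := by
  rw [sigmaC_two]; simp [Finset.sum_range_succ, sigmaC_one]; norm_num
lemma s23 : sigmaC 2 3 = -(13/8) := by
  rw [sigmaC_two]; simp [Finset.sum_range_succ, sigmaC_one]; norm_num

lemma sigmaC_three (m : ℕ) : sigmaC 3 m =
    ∑ i ∈ Finset.range (m + 1), ∑ j ∈ Finset.range (i + 1),
      ((-3 : ℚ) ^ (m - i) * sigmaC 1 j * sigmaC 2 (i - j)
        + (-3 : ℚ) ^ (m - i) * sigmaC 2 j * sigmaC 1 (i - j)) := by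
  rw [sigmaC_eq (by norm_num)]
  refine Finset.sum_congr rfl fun i _ => Finset.sum_congr rfl fun j _ => ?_
  rw [show Finset.Icc 1 (3-1) = {1, 2} from rfl]
  norm_num [Finset.sum_insert, Finset.sum_singleton]

lemma s30 : sigmaC 3 0 = 1/32 := by
  rw [sigmaC_three]; simp [Finset.sum_range_succ, sigmaC_one, s20, s21, s22, s23]; norm_num
lemma s31 : sigmaC 3 1 = -(1/4) := by
  rw [sigmaC_three]; simp [Finset.sum_range_succ, sigmaC_one, s20, s21, s22, s23]; norm_num
lemma s32 : sigmaC 3 2 = 5/4 := by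
  rw [sigmaC_three]; simp [Finset.sum_range_succ, sigmaC_one, s20, s21, s22, s23]; norm_num

lemma sigmaC_four (m : ℕ) : sigmaC 4 m =
    ∑ i ∈ Finset.range (m + 1), ∑ j ∈ Finset.range (i + 1),
      ((-4 : ℚ) ^ (m - i) * sigmaC 1 j * sigmaC 3 (i - j)
        + (-4 : ℚ) ^ (m - i) * sigmaC 2 j * sigmaC 2 (i - j)
        + (-4 : ℚ) ^ (m - i) * sigmaC 3 j * sigmaC 1 (i - j)) := by
  rw [sigmaC_eq (by norm_num)]
  refine Finset.sum_congr rfl fun i _ => Finset.sum_congr rfl fun j _ => ?_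
  rw [show Finset.Icc 1 (4-1) = {1, 2, 3} from rfl]
  norm_num [Finset.sum_insert, Finset.sum_singleton]; ring

lemma s40 : sigmaC 4 0 = 5/256 := by
  rw [sigmaC_four]; simp [Finset.sum_range_succ, sigmaC_one, s20, s21, s22, s30, s31, s32]; norm_num
lemma s41 : sigmaC 4 1 = -(1/4) := by
  rw [sigmaC_four]; simp [Finset.sum_range_succ, sigmaC_one, s20, s21, s22, s30, s31, s32]; norm_num

lemma sigmaC_five (m : ℕ) : sigmaC 5 m =
    ∑ i ∈ Finset.range (m + 1), ∑ j ∈ Finset.range (i + 1),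
      ((-5 : ℚ) ^ (m - i) * sigmaC 1 j * sigmaC 4 (i - j)
        + (-5 : ℚ) ^ (m - i) * sigmaC 2 j * sigmaC 3 (i - j)
        + (-5 : ℚ) ^ (m - i) * sigmaC 3 j * sigmaC 2 (i - j)
        + (-5 : ℚ) ^ (m - i) * sigmaC 4 j * sigmaC 1 (i - j)) := by
  rw [sigmaC_eq (by norm_num)]
  refine Finset.sum_congr rfl fun i _ => Finset.sum_congr rfl fun j _ => ?_
  rw [show Finset.Icc 1 (5-1) = {1, 2, 3, 4} from rfl]
  norm_num [Finset.sum_insert, Finset.sum_singleton]; ring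

lemma s50 : sigmaC 5 0 = 7/512 := by
  rw [sigmaC_five]
  simp [Finset.sum_range_succ, sigmaC_one, s20, s30, s40]; norm_num

/-- The ordinary potential polynomial `A_{μ,m}(x_1,…,x_m)`: the coefficient of `z^m`
in the formal power series `(1 + Σ_{n≥1} x_n z^n)^μ`. -/
noncomputable def potA (x : ℕ → ℚ) (μ m : ℕ) : ℚ :=
  PowerSeries.coeff (R := ℚ) m ((1 + PowerSeries.mk (fun n => if n = 0 then 0 else x n)) ^ μ)

lemma potA_zero (x : ℕ → ℚ) (m : ℕ) : potA x 0 m = if m = 0 then 1 else 0 := by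
  simp [potA, PowerSeries.coeff_one]

lemma potA_succ (x : ℕ → ℚ) (μ m : ℕ) :
    potA x (μ + 1) m = ∑ i ∈ Finset.range (m + 1),
      potA x μ i * (if m - i = 0 then 1 else x (m - i)) := by
  rw [potA, pow_succ, PowerSeries.coeff_mul,
    Finset.Nat.sum_antidiagonal_eq_sum_range_succ_mk]
  refine Finset.sum_congr rfl fun i hi => ?_
  rw [Finset.mem_range] at hi
  congr 1
  rw [map_add, PowerSeries.coeff_mk, PowerSeries.coeff_one]
  by_cases h : m - i = 0 <;> simp [h]

lemma potA_m0 (x : ℕ → ℚ) (μ : ℕ) : potA x μ 0 = 1 := by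
  induction μ with
  | zero => simp [potA_zero]
  | succ n ih => rw [potA_succ]; simp [ih]

lemma potA_m1 (x : ℕ → ℚ) (μ : ℕ) : potA x μ 1 = μ * x 1 := by
  induction μ with
  | zero => simp [potA_zero]
  | succ n ih =>
    rw [potA_succ]
    simp [Finset.sum_range_succ, ih, potA_m0]
    ring

lemma potA_m2 (x : ℕ → ℚ) (μ : ℕ) :
    potA x μ 2 = μ * x 2 + (μ * (μ - 1) / 2 : ℚ) * x 1 ^ 2 := by
  induction μ with
  | zero => simp [potA_zero]
  | succ n ih =>
    rw [potA_succ]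
    simp [Finset.sum_range_succ, ih, potA_m0, potA_m1]
    ring

lemma potA_m3 (x : ℕ → ℚ) (μ : ℕ) :
    potA x μ 3 = μ * x 3 + μ * (μ - 1) * x 1 * x 2
      + (μ * (μ - 1) * (μ - 2) / 6 : ℚ) * x 1 ^ 3 := by
  induction μ with
  | zero => simp [potA_zero]
  | succ n ih =>
    rw [potA_succ]
    simp [Finset.sum_range_succ, ih, potA_m0, potA_m1, potA_m2]
    ring

/-- The coefficients `ρ_k`, defined recursively by
`ρ_k = (-1)^{k+1} - Σ_{n=1}^{k-1} (-1)^{k-n} ρ_n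
      - Σ_{n=2}^{k+1} 2^{n+1} Σ_{m=0}^{k-n+1} σ_{k-n-m+1}^{(n)} A_{n,m}(ρ_1,…,ρ_m)`. -/
noncomputable def rhoC : ℕ → ℚ := fun k =>
  Nat.strongRecOn k (fun k ih =>
    let r : ℕ → ℚ := fun i => if h : i < k then ih i h else 0
    (-1 : ℚ) ^ (k + 1) - ∑ n ∈ Finset.Icc 1 (k - 1), (-1 : ℚ) ^ (k - n) * r n
      - ∑ n ∈ Finset.Icc 2 (k + 1), (2 : ℚ) ^ (n + 1) *
          ∑ m ∈ Finset.range (k + 2 - n), sigmaC n (k + 1 - n - m) * potA r n m)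

lemma rhoC_eq (k : ℕ) : rhoC k =
    (-1 : ℚ) ^ (k + 1)
      - ∑ n ∈ Finset.Icc 1 (k - 1), (-1 : ℚ) ^ (k - n) * rhoC n
      - ∑ n ∈ Finset.Icc 2 (k + 1), (2 : ℚ) ^ (n + 1) *
          ∑ m ∈ Finset.range (k + 2 - n),
            sigmaC n (k + 1 - n - m) * potA (fun i => if i < k then rhoC i else 0) n m := by
  rw [rhoC, strongRecOn_eq]
  have hr : (fun i => if h : i < k then
      Nat.strongRecOn (motive := fun _ => ℚ) i (fun k ih =>
        let r : ℕ → ℚ := fun i => if h : i < k then ih i h else 0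
        (-1 : ℚ) ^ (k + 1) - ∑ n ∈ Finset.Icc 1 (k - 1), (-1 : ℚ) ^ (k - n) * r n
          - ∑ n ∈ Finset.Icc 2 (k + 1), (2 : ℚ) ^ (n + 1) *
              ∑ m ∈ Finset.range (k + 2 - n), sigmaC n (k + 1 - n - m) * potA r n m)
      else 0) = fun i => if i < k then rhoC i else 0 := by
    funext i
    split <;> rfl
  simp only [hr]
  congr 1
  refine congrArg _ (Finset.sum_congr rfl fun n hn => ?_)
  rw [Finset.mem_Icc] at hn
  rw [dif_pos (by omega : n < k)]
  rfl

lemma r1 : rhoC 1 = 1 / 2 := by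
  rw [rhoC_eq]
  norm_num [show Finset.Icc 2 2 = {2} from rfl, potA_m0, s20]

lemma r2 : rhoC 2 = 1 / 2 := by
  rw [rhoC_eq]
  norm_num [show Finset.Icc 1 1 = {1} from rfl, show Finset.Icc 2 3 = {2, 3} from rfl,
    Finset.sum_range_succ, potA_m0, potA_m1, s20, s21, s30, r1]

lemma r3 : rhoC 3 = -(1 / 2) := by
  rw [rhoC_eq]
  norm_num [show Finset.Icc 1 2 = {1, 2} from rfl, show Finset.Icc 2 4 = {2, 3, 4} from rfl,
    Finset.sum_range_succ, potA_m0, potA_m1, potA_m2, s20, s21, s22, s30, s31, s40, r1, r2]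

lemma r4 : rhoC 4 = -(1 / 2) := by
  rw [rhoC_eq]
  norm_num [show Finset.Icc 1 3 = {1, 2, 3} from rfl, show Finset.Icc 2 5 = {2, 3, 4, 5} from rfl,
    Finset.sum_range_succ, potA_m0, potA_m1, potA_m2, potA_m3,
    s20, s21, s22, s23, s30, s31, s32, s40, s41, s50, r1, r2, r3]

/-- The first four coefficients of the asymptotic expansion of `(r*(ϕ_ν))²`:
`ρ_1 = 1/2`, `ρ_2 = 1/2`, `ρ_3 = -1/2`, `ρ_4 = -1/2`. -/
theorem rhoC_values :
    rhoC 1 = 1 / 2 ∧ rhoC 2 = 1 / 2 ∧ rhoC 3 = -(1 / 2) ∧ rhoC 4 = -(1 / 2) :=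
  ⟨r1, r2, r3, r4⟩
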